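/- Every archimedean divisible effect algebra with a compression base having the b-comparability property is strongly archimedean, i.e. for a, b, c ∈ E, if a ≤ b ⊕ (1/n)c for all n ∈ ℕ then a ≤ b. -/

import Mathlib

/- Common definitions: effect algebras, compression bases, spectrality -/

attribute [local instance 0] Classical.propDecidable

universe u

structure EffectAlgebra (E : Type u) where
  padd : E → E → Option E
  zero : E
  one : E
  comm : ∀ a b, padd a b = padd b a
  assoc : ∀ a b c ab abc, padd a b = some ab → padd ab c = some abc →
      ∃ bc, padd b c = some bc ∧ padd a bc = some abc
  orth_exists : ∀ a, ∃ x, padd a x = some one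
  orth_unique : ∀ a x y, padd a x = some one → padd a y = some one → x = y
  add_one : ∀ a b, padd a one = some b → a = zero

namespace EffectAlgebra

variable {E : Type u} (EA : EffectAlgebra E)

/-- `a ⊥ b` and `a ⊕ b = c`. -/
def le (a b : E) : Prop := ∃ c, EA.padd a c = some b

/-- the orthosupplement `a'`. -/
noncomputable def compl (a : E) : E := (EA.orth_exists a).choose

/-- `b ⊖ a` (the element `c` with `a ⊕ c = b`, when it exists). -/
noncomputable def osub (b a : E) : E :=
  if h : ∃ c, EA.padd a c = some b then h.choose else EA.zero

/-- the value of `a ⊕ b` (defaulting to `0` when undefined). -/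
noncomputable def oplusD (a b : E) : E := (EA.padd a b).getD EA.zero

def IsSharp (a : E) : Prop := ∀ x, EA.le x a → EA.le x (EA.compl a) → x = EA.zero

/-- sub-effect algebra. -/
def SubEA (P : Set E) : Prop :=
  EA.zero ∈ P ∧ EA.one ∈ P ∧ (∀ a ∈ P, EA.compl a ∈ P) ∧
    ∀ a ∈ P, ∀ b ∈ P, ∀ c, EA.padd a b = some c → c ∈ P

/-- Mackey compatibility: `a = a₁ ⊕ c`, `b = b₁ ⊕ c` with `a₁ ⊕ b₁ ⊕ c` defined. -/
def Mackey (a b : E) : Prop :=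
  ∃ a1 b1 c d e, EA.padd a1 b1 = some d ∧ EA.padd d c = some e ∧
    EA.padd a1 c = some a ∧ EA.padd b1 c = some b

def Additive (J : E → E) : Prop :=
  ∀ a b c, EA.padd a b = some c → EA.padd (J a) (J b) = some (J c)

def Retraction (J : E → E) : Prop :=
  EA.Additive J ∧ ∀ a, EA.le a (J EA.one) → J a = a

def Compression (J : E → E) : Prop :=
  EA.Retraction J ∧ ∀ a, (J a = EA.zero ↔ EA.le a (EA.compl (J EA.one)))

/-- `I` is a supplement of `J`: `Ker J = ran I` and `Ker I = ran J`. -/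
def Supplement (I J : E → E) : Prop :=
  (∀ a, J a = EA.zero ↔ ∃ b, I b = a) ∧ (∀ a, I a = EA.zero ↔ ∃ b, J b = a)

/-- the `n`-fold sum `n·a`, when defined. -/
def nsmulE : ℕ → E → Option E
  | 0, _ => some EA.zero
  | n + 1, a => (nsmulE n a).bind fun b => EA.padd a b

def ArchimedeanEA : Prop :=
  ∀ a : E, (∀ n : ℕ, ∃ b, EA.nsmulE n a = some b) → a = EA.zero

/-- a state on an effect algebra. -/
def IsState (s : E → ℝ) : Prop :=
  s EA.one = 1 ∧ (∀ a, 0 ≤ s a ∧ s a ≤ 1) ∧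
    ∀ a b c, EA.padd a b = some c → s c = s a + s b

noncomputable def partialSum (f : ℕ → E) : ℕ → E
  | 0 => EA.zero
  | n + 1 => EA.oplusD (partialSum f n) (f n)

/-- σ-additivity of a state: if all partial sums of an orthogonal sequence are defined
and the orthosum (= supremum of the partial sums) exists, the state is countably additive. -/
def SigmaAdditive (s : E → ℝ) : Prop :=
  ∀ f : ℕ → E, ∀ b : E,
    (∀ n, ∃ c, EA.padd (EA.partialSum f n) (f n) = some c) →
    (∀ n, EA.le (EA.partialSum f n) b) →
    (∀ c, (∀ n, EA.le (EA.partialSum f n) c) → EA.le b c) →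
    Filter.Tendsto (fun n => ∑ i ∈ Finset.range n, s (f i)) Filter.atTop (nhds (s b))

/-- A compression base: a family of compressions indexed by a sub-effect algebra `P`
such that each `p ∈ P` is the focus of `J p`, and Mackey compatible projections
compose to a projection. -/
structure CompressionBase {E : Type u} (EA : EffectAlgebra E) where
  P : Set E
  J : E → E → E
  sub : EA.SubEA P
  compr : ∀ p ∈ P, EA.Compression (J p)
  focus : ∀ p ∈ P, J p EA.one = p
  mackey : ∀ p ∈ P, ∀ q ∈ P, EA.Mackey p q → ∃ r ∈ P, J p ∘ J q = J r

variable (CB : CompressionBase EA)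

/-- `a ∈ C(p)`:  `a = J_p(a) ⊕ J_{p'}(a)`. -/
def inC (a p : E) : Prop :=
  EA.padd (CB.J p a) (CB.J (EA.compl p) a) = some a

/-- `PC(a) = {p ∈ P : a ∈ C(p)}`. -/
def PC (a : E) : Set E := {p | p ∈ CB.P ∧ inC EA CB a p}

/-- the bicommutant `P(a)`. -/
def bicomm (a : E) : Set E :=
  {p | p ∈ PC EA CB a ∧ ∀ q ∈ PC EA CB a, inC EA CB p q}

/-- `PC(A)` for a set `A ⊆ E`. -/
def PCset (A : Set E) : Set E := {p | p ∈ CB.P ∧ ∀ a ∈ A, inC EA CB a p}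

/-- `P(Q) = PC(PC(Q) ∪ Q)`. -/
def Pset (Q : Set E) : Set E := PCset EA CB (PCset EA CB Q ∪ Q)

/-- `P_≤(e,f)`. -/
def Ple (e f : E) : Set E :=
  {p | p ∈ Pset EA CB {e, f} ∧ EA.le (CB.J p e) (CB.J p f) ∧
    EA.le (CB.J (EA.compl p) f) (CB.J (EA.compl p) e)}

/-- a Boolean subalgebra of `P`: a sub-effect algebra of `E` contained in `P`
whose elements are pairwise Mackey compatible, with witnesses inside. -/
def BooleanSub (B : Set E) : Prop :=
  B ⊆ CB.P ∧ EA.SubEA B ∧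
    ∀ p ∈ B, ∀ q ∈ B, ∃ p1 ∈ B, ∃ q1 ∈ B, ∃ c ∈ B, ∃ d e,
      EA.padd p1 q1 = some d ∧ EA.padd d c = some e ∧
      EA.padd p1 c = some p ∧ EA.padd q1 c = some q

/-- `a` is a b-element with associated Boolean subalgebra `B`. -/
def IsBElementWith (a : E) (B : Set E) : Prop :=
  BooleanSub EA CB B ∧ ∀ p ∈ CB.P, (inC EA CB a p ↔ ∀ b ∈ B, inC EA CB b p)

def IsBElement (a : E) : Prop := ∃ B, IsBElementWith EA CB a B

def BProperty : Prop := ∀ a : E, IsBElement EA CB a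

/-- commuting of b-elements: `e C f` iff `P(e) ↔ P(f)`. -/
def CommuteEl (e f : E) : Prop :=
  ∀ p ∈ bicomm EA CB e, ∀ q ∈ bicomm EA CB f, EA.Mackey p q

def BComparability : Prop :=
  BProperty EA CB ∧ ∀ e f : E, CommuteEl EA CB e f → (Ple EA CB e f).Nonempty

def IsProjCover (a p : E) : Prop :=
  p ∈ CB.P ∧ ∀ q ∈ CB.P, (EA.le a q ↔ EA.le p q)

def ProjCoverProp : Prop := ∀ a : E, ∃ p, IsProjCover EA CB a p

def Spectral : Prop := ProjCoverProp EA CB ∧ BComparability EA CB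

/-- a block of `P`: a maximal set of pairwise Mackey compatible projections. -/
def IsBlock (B : Set E) : Prop :=
  B ⊆ CB.P ∧ (∀ p ∈ B, ∀ q ∈ B, EA.Mackey p q) ∧
    ∀ B' : Set E, B' ⊆ CB.P → (∀ p ∈ B', ∀ q ∈ B', EA.Mackey p q) → B ⊆ B' → B' = B

/-- the C-block `C(B)`. -/
def Cblock (B : Set E) : Set E := {a | ∀ p ∈ B, inC EA CB a p}

/-- `(f − e)_+` (the positive part, defined when `P_≤(e,f)` is nonempty). -/
noncomputable def posPart (e f : E) : E :=
  if h : (Ple EA CB e f).Nonempty then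
    EA.osub (CB.J h.some f) (CB.J h.some e)
  else EA.zero

noncomputable def projCover (a : E) : E :=
  if h : ∃ p, IsProjCover EA CB a p then h.choose else EA.zero

def IsMeetP (p q m : E) : Prop :=
  m ∈ CB.P ∧ EA.le m p ∧ EA.le m q ∧ ∀ s ∈ CB.P, EA.le s p → EA.le s q → EA.le s m

/-- `p ∧ q` in `P`. -/
noncomputable def pmeet (p q : E) : E :=
  if h : ∃ m, IsMeetP EA CB p q m then h.choose else EA.zero

/-- infimum of a set of projections in `P`. -/
def IsInfP (S : Set E) (m : E) : Prop :=
  m ∈ CB.P ∧ (∀ s ∈ S, EA.le m s) ∧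
    ∀ t ∈ CB.P, (∀ s ∈ S, EA.le t s) → EA.le t m

/-! Relative (to a projection `q`, i.e. computed in the interval `[0,q]`) notions. -/

def Pq (q : E) : Set E := {p | p ∈ CB.P ∧ EA.le p q}

def inCq (q a p : E) : Prop :=
  EA.padd (CB.J p a) (CB.J (EA.osub q p) a) = some a

def PCq (q a : E) : Set E := {p | p ∈ Pq EA CB q ∧ inCq EA CB q a p}

def bicommq (q a : E) : Set E :=
  {p | p ∈ PCq EA CB q a ∧ ∀ r ∈ PCq EA CB q a, inCq EA CB q p r}

def PCsetq (q : E) (A : Set E) : Set E :=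
  {p | p ∈ Pq EA CB q ∧ ∀ a ∈ A, inCq EA CB q a p}

def Psetq (q : E) (Q : Set E) : Set E := PCsetq EA CB q (PCsetq EA CB q Q ∪ Q)

def Pleq (q e f : E) : Set E :=
  {p | p ∈ Psetq EA CB q {e, f} ∧ EA.le (CB.J p e) (CB.J p f) ∧
    EA.le (CB.J (EA.osub q p) f) (CB.J (EA.osub q p) e)}

noncomputable def posPartq (q e f : E) : E :=
  if h : (Pleq EA CB q e f).Nonempty then
    EA.osub (CB.J h.some f) (CB.J h.some e)
  else EA.zero

def IsProjCoverq (q a p : E) : Prop :=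
  p ∈ Pq EA CB q ∧ ∀ s ∈ Pq EA CB q, (EA.le a s ↔ EA.le p s)

noncomputable def projCoverq (q a : E) : E :=
  if h : ∃ p, IsProjCoverq EA CB q a p then h.choose else EA.zero

def Mackeyq (q a b : E) : Prop :=
  ∃ a1 b1 c d e, EA.padd a1 b1 = some d ∧ EA.padd d c = some e ∧ EA.le e q ∧
    EA.padd a1 c = some a ∧ EA.padd b1 c = some b

def SubEAq (q : E) (F : Set E) : Prop :=
  EA.zero ∈ F ∧ q ∈ F ∧ (∀ x ∈ F, EA.osub q x ∈ F) ∧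
    ∀ x ∈ F, ∀ y ∈ F, ∀ z, EA.padd x y = some z → EA.le z q → z ∈ F

def BooleanSubq (q : E) (B : Set E) : Prop :=
  B ⊆ Pq EA CB q ∧ SubEAq EA q B ∧
    ∀ p ∈ B, ∀ r ∈ B, ∃ p1 ∈ B, ∃ r1 ∈ B, ∃ c ∈ B, ∃ d e,
      EA.padd p1 r1 = some d ∧ EA.padd d c = some e ∧ EA.le e q ∧
      EA.padd p1 c = some p ∧ EA.padd r1 c = some r

def IsBElementq (q a : E) : Prop :=
  ∃ B, BooleanSubq EA CB q B ∧
    ∀ p ∈ Pq EA CB q, (inCq EA CB q a p ↔ ∀ b ∈ B, inCq EA CB q b p)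

def BPropertyq (q : E) : Prop := ∀ a : E, EA.le a q → IsBElementq EA CB q a

def CommuteElq (q e f : E) : Prop :=
  ∀ p ∈ bicommq EA CB q e, ∀ r ∈ bicommq EA CB q f, Mackeyq EA q p r

def BComparabilityq (q : E) : Prop :=
  BPropertyq EA CB q ∧ ∀ e f : E, EA.le e q → EA.le f q →
    CommuteElq EA CB q e f → (Pleq EA CB q e f).Nonempty

/-! The binary spectral resolution. -/

/-- `λ(w) = Σ_j w_j 2^{-j}` (head of the list is the first digit). -/
def lamOf : List Bool → ℚ
  | [] => 0
  | b :: t => ((if b then 1 else 0) + lamOf t) / 2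

/-- all binary strings of length `n`, in lexicographic order. -/
def allStrings : ℕ → List (List Bool)
  | 0 => [[]]
  | n + 1 => (allStrings n).flatMap fun w => [w ++ [false], w ++ [true]]

noncomputable def listSum (l : List E) : E :=
  l.foldl (fun acc x => EA.oplusD acc x) EA.zero

/-- the families `(u_w, c_w)`; the binary string is given in reversed order
(head of the list is the last digit). -/
noncomputable def ucAux (a : E) : List Bool → E × E
  | [] => (projCover EA CB a, a)
  | bit :: t =>
      let p := ucAux a t
      let q := p.1
      let cw := p.2
      let cw' := EA.osub q cw
      let d := posPartq EA CB q cw' cw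
      let u0 := pmeet EA CB (EA.osub q (projCoverq EA CB q d)) q
      if bit then (pmeet EA CB q (EA.compl u0), d)
      else (u0, EA.oplusD (CB.J u0 cw) (CB.J u0 cw))

noncomputable def uw (a : E) (w : List Bool) : E := (ucAux EA CB a w.reverse).1

noncomputable def cw (a : E) (w : List Bool) : E := (ucAux EA CB a w.reverse).2

/-- the binary spectral projection `p_{a,λ(w1)}`. -/
noncomputable def pbin (a : E) (w : List Bool) : E :=
  listSum EA (EA.compl (projCover EA CB a) ::
    (((allStrings (w.length + 1)).filter
        fun v => lamOf v ≤ lamOf (w ++ [false])).map (uw EA CB a)))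

def Dyadic01 (x : ℚ) : Prop := ∃ n k : ℕ, (k : ℚ) ≤ 2 ^ n ∧ x = (k : ℚ) / 2 ^ n

/-- the binary spectral resolution `p_{a,λ}`, for dyadic rationals `λ ∈ [0,1]`. -/
noncomputable def pdyad (a : E) (x : ℚ) : E :=
  if x ≤ 0 then EA.compl (projCover EA CB a)
  else if 1 ≤ x then EA.one
  else if h : ∃ w : List Bool, lamOf (w ++ [true]) = x then pbin EA CB a h.choose
  else EA.zero

/-- the rational spectral resolution `p_{a,λ} = ⋀_{μ > λ, μ dyadic} p_{a,μ}`. -/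
noncomputable def ratRes (a : E) (x : ℚ) : E :=
  if h : ∃ m, IsInfP EA CB {y | ∃ μ, Dyadic01 μ ∧ x < μ ∧ y = pdyad EA CB a μ} m
  then h.choose else EA.zero

/-- the partial maps `f_0(b) = 2b`, `f_1(b) = (2b')'` computed in `[0,uu]`. -/
noncomputable def fstep (uu b : E) (bit : Bool) : Option E :=
  if bit then
    (if EA.le (EA.osub uu b) b
      then some (EA.osub uu (EA.oplusD (EA.osub uu b) (EA.osub uu b))) else none)
  else
    (if EA.le b (EA.osub uu b) then some (EA.oplusD b b) else none)

/-- `f_w = f_{w_n} ∘ ⋯ ∘ f_{w_1}`, computed in `[0,uu]`, as a partial map. -/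
noncomputable def fword (uu : E) (w : List Bool) (b : E) : Option E :=
  w.foldl (fun ob bit => ob.bind fun x => fstep EA uu x bit) (some b)

end EffectAlgebra

/-!
Halving turns the problem into a comparison with `u = 1/2`. The element `s = a/2 ⊕ b'/2` is
defined even when `a ⊕ b'` is not, `s ≤ u = b/2 ⊕ b'/2` gives `a ≤ b`, and the hypothesis gives
`s ≤ u ⊕ x/2` whenever `n·x = c`. Since `J_p(1/2) = p/2`, the element `u` lies in `C(p)` for
every `p ∈ P`, so `s` and `u` commute and b-comparability yields `p` with `J_p s ≤ J_p u` and
`J_{p'} u ≤ J_{p'} s`. The excess of `J_{p'} s` over `J_{p'} u` lies below `J_{p'}(x/2)`, whose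
`n`-fold sum exists, for every `n`; so it vanishes by the archimedean property, and
`s = J_p s ⊕ J_{p'} s ≤ J_p u ⊕ J_{p'} u = u`.
-/

namespace EffectAlgebra

variable {E : Type u} (EA : EffectAlgebra E)

theorem padd_compl (a : E) : EA.padd a (EA.compl a) = some EA.one :=
  (EA.orth_exists a).choose_spec

theorem padd_zero (a : E) : EA.padd a EA.zero = some a := by
  obtain ⟨x, hx⟩ := EA.orth_exists EA.one
  have hx0 : x = EA.zero := EA.add_one x EA.one (by rw [EA.comm]; exact hx)
  subst hx0
  have ha' : EA.padd (EA.compl a) a = some EA.one := by rw [EA.comm]; exact EA.padd_compl a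
  obtain ⟨a0, ha0, ha'a0⟩ := EA.assoc _ _ _ _ _ ha' hx
  rwa [EA.orth_unique _ _ _ ha'a0 ha'] at ha0

theorem le_refl (a : E) : EA.le a a := ⟨EA.zero, EA.padd_zero a⟩

theorem le_one (a : E) : EA.le a EA.one := ⟨EA.compl a, EA.padd_compl a⟩

def IsHalving (half : E → E) : Prop := ∀ x y, EA.padd y y = some x ↔ y = half x

variable {EA}

theorem assoc' {a b c bc abc : E} (hbc : EA.padd b c = some bc)
    (habc : EA.padd a bc = some abc) :
    ∃ ab, EA.padd a b = some ab ∧ EA.padd ab c = some abc := by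
  rw [EA.comm] at hbc habc
  obtain ⟨ba, hba, h⟩ := EA.assoc c b a bc abc hbc habc
  rw [EA.comm] at hba h
  exact ⟨ba, hba, h⟩

theorem padd_right_comm {a b c ab abc : E} (hab : EA.padd a b = some ab)
    (habc : EA.padd ab c = some abc) :
    ∃ ac, EA.padd a c = some ac ∧ EA.padd ac b = some abc := by
  obtain ⟨bc, hbc, h⟩ := EA.assoc a b c ab abc hab habc
  rw [EA.comm] at hbc
  exact assoc' hbc h

theorem padd_right_cancel {a b c m : E} (ha : EA.padd a c = some m)
    (hb : EA.padd b c = some m) : a = b := by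
  obtain ⟨d, hd, had⟩ := EA.assoc a c (EA.compl m) m EA.one ha (EA.padd_compl m)
  obtain ⟨d', hd', hbd⟩ := EA.assoc b c (EA.compl m) m EA.one hb (EA.padd_compl m)
  rw [Option.some.inj (hd'.symm.trans hd), EA.comm] at hbd
  rw [EA.comm] at had
  exact EA.orth_unique d a b had hbd

theorem padd_padd_padd_comm {a b c d ab cd s : E} (hab : EA.padd a b = some ab)
    (hcd : EA.padd c d = some cd) (hs : EA.padd ab cd = some s) :
    ∃ ac bd, EA.padd a c = some ac ∧ EA.padd b d = some bd ∧ EA.padd ac bd = some s := by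
  obtain ⟨bcd, hbcd, h⟩ := EA.assoc a b cd ab s hab hs
  obtain ⟨bc, hbc, hbcd'⟩ := assoc' hcd hbcd
  rw [EA.comm] at hbc
  obtain ⟨bd, hbd, hcbd⟩ := EA.assoc c b d bc bcd hbc hbcd'
  obtain ⟨ac, hac, hacbd⟩ := assoc' hcbd h
  exact ⟨ac, bd, hac, hbd, hacbd⟩

theorem padd_le_padd {a b c d s : E} (hab : EA.le a b) (hcd : EA.le c d)
    (hs : EA.padd b d = some s) :
    ∃ t, EA.padd a c = some t ∧ EA.le t s := by
  obtain ⟨x, hx⟩ := hab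
  obtain ⟨y, hy⟩ := hcd
  obtain ⟨ac, xy, hac, hxy, h⟩ := padd_padd_padd_comm hx hy hs
  exact ⟨ac, hac, xy, h⟩

theorem exists_padd_of_le_compl {a b : E} (h : EA.le b (EA.compl a)) :
    ∃ t, EA.padd a b = some t := by
  obtain ⟨t, ht, -⟩ := padd_le_padd (EA.le_refl a) h (EA.padd_compl a)
  exact ⟨t, ht⟩

theorem le_of_padd_le_padd {a b c ab ac : E} (hab : EA.padd a b = some ab)
    (hac : EA.padd a c = some ac) (h : EA.le ab ac) : EA.le b c := by
  obtain ⟨r, hr⟩ := h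
  obtain ⟨br, hbr, habr⟩ := EA.assoc a b r ab ac hab hr
  rw [EA.comm] at habr hac
  obtain rfl := padd_right_cancel habr hac
  exact ⟨r, hbr⟩

theorem nsmulE_succ_eq_some {n : ℕ} {a c : E} (h : EA.nsmulE (n + 1) a = some c) :
    ∃ b, EA.nsmulE n a = some b ∧ EA.padd a b = some c :=
  Option.bind_eq_some_iff.mp h

theorem nsmulE_two (a : E) : EA.nsmulE 2 a = EA.padd a a := by
  change (EA.padd a EA.zero).bind (EA.padd a) = _
  rw [EA.padd_zero]
  rfl

theorem nsmulE_mono {a b c : E} (hab : EA.le a b) :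
    ∀ {n : ℕ}, EA.nsmulE n b = some c → ∃ d, EA.nsmulE n a = some d ∧ EA.le d c
  | 0, h => ⟨EA.zero, rfl, by cases h; exact EA.le_refl _⟩
  | n + 1, h => by
    obtain ⟨c', hc', hbc'⟩ := nsmulE_succ_eq_some h
    obtain ⟨d', hd', hd'c'⟩ := nsmulE_mono hab hc'
    obtain ⟨d, hd, hdc⟩ := padd_le_padd hab hd'c' hbc'
    exact ⟨d, by change (EA.nsmulE n a).bind (EA.padd a) = _; rw [hd']; exact hd, hdc⟩

namespace Additive

variable {J : E → E} (hJ : EA.Additive J)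
include hJ

theorem le {a b : E} (h : EA.le a b) : EA.le (J a) (J b) := by
  obtain ⟨c, hc⟩ := h
  exact ⟨J c, hJ _ _ _ hc⟩

theorem map_zero : J EA.zero = EA.zero := by
  have h0 : EA.padd (J EA.zero) (J EA.zero) = some (J EA.zero) :=
    hJ _ _ _ (EA.padd_zero EA.zero)
  obtain ⟨x, hx, h⟩ := EA.assoc _ _ _ _ _ h0 (EA.padd_compl (J EA.zero))
  obtain rfl : x = EA.one := Option.some.inj (hx.symm.trans (EA.padd_compl _))
  exact EA.add_one _ _ h

theorem nsmulE {n : ℕ} {a c : E} (h : EA.nsmulE n a = some c) :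
    EA.nsmulE n (J a) = some (J c) := by
  induction n generalizing c with
  | zero => cases h; exact congrArg some hJ.map_zero.symm
  | succ n ih =>
    obtain ⟨b, hb, hab⟩ := nsmulE_succ_eq_some h
    change (EA.nsmulE n (J a)).bind (EA.padd (J a)) = _
    rw [ih hb]
    exact hJ _ _ _ hab

end Additive

theorem ArchimedeanEA.eq_zero_of_forall_le (harch : EA.ArchimedeanEA) {z : E}
    (h : ∀ n : ℕ, 0 < n → ∃ y c, EA.le z y ∧ EA.nsmulE n y = some c) : z = EA.zero := by
  refine harch z fun n => ?_
  rcases Nat.eq_zero_or_pos n with rfl | hn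
  · exact ⟨EA.zero, rfl⟩
  obtain ⟨y, c, hzy, hy⟩ := h n hn
  obtain ⟨d, hd, -⟩ := nsmulE_mono hzy hy
  exact ⟨d, hd⟩

theorem exists_isHalving (h : ∀ a : E, ∃! x, EA.nsmulE 2 x = some a) :
    ∃ half, EA.IsHalving half := by
  choose half hhalf huniq using h
  refine ⟨half, fun x y => ⟨fun hy => huniq x y ?_, ?_⟩⟩
  · show EA.nsmulE 2 y = some x
    rwa [nsmulE_two]
  · rintro rfl
    rw [← nsmulE_two]
    exact hhalf x

namespace IsHalving

variable {half : E → E} (hh : EA.IsHalving half)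
include hh

theorem padd_self (x : E) : EA.padd (half x) (half x) = some x := (hh x _).2 rfl

theorem additive : EA.Additive half := by
  intro x y z hxy
  obtain ⟨s, s', hs, hs', hss'⟩ := padd_padd_padd_comm (hh.padd_self x) (hh.padd_self y) hxy
  rw [← Option.some.inj (hs.symm.trans hs')] at hss'
  rwa [(hh z s).1 hss'] at hs

theorem le_of_half_le_half {a b : E} (h : EA.le (half a) (half b)) : EA.le a b := by
  obtain ⟨c, hc⟩ := h
  obtain ⟨a', cc, ha', hcc, h⟩ := padd_padd_padd_comm hc hc (hh.padd_self b)
  rw [Option.some.inj (ha'.symm.trans (hh.padd_self a))] at h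
  exact ⟨cc, h⟩

theorem le_half_one (a : E) : EA.le (half a) (half EA.one) := hh.additive.le (EA.le_one a)

theorem exists_padd_half_one_of_le {y : E} (h : EA.le y (half EA.one)) :
    ∃ t, EA.padd (half EA.one) y = some t := by
  refine exists_padd_of_le_compl ?_
  rwa [EA.orth_unique _ _ _ (EA.padd_compl _) (hh.padd_self EA.one)]

theorem exists_padd_half_one_le {a b d s x : E}
    (hs : EA.padd (half a) (half (EA.compl b)) = some s)
    (hbx : EA.padd b x = some d) (had : EA.le a d) :
    ∃ t, EA.padd (half EA.one) (half x) = some t ∧ EA.le s t := by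
  obtain ⟨t, ht⟩ := hh.exists_padd_half_one_of_le (hh.le_half_one x)
  have hbb := hh.additive _ _ _ (EA.padd_compl b)
  obtain ⟨bx, hbx', hbxt⟩ := padd_right_comm hbb ht
  rw [Option.some.inj (hbx'.symm.trans (hh.additive _ _ _ hbx))] at hbxt
  obtain ⟨s', hs', hs't⟩ := padd_le_padd (hh.additive.le had) (EA.le_refl _) hbxt
  rw [Option.some.inj (hs'.symm.trans hs)] at hs't
  exact ⟨t, ht, hs't⟩

theorem le_of_le_half_one {a b s : E} (hs : EA.padd (half a) (half (EA.compl b)) = some s)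
    (h : EA.le s (half EA.one)) : EA.le a b := by
  have hbb := hh.additive _ _ _ (EA.padd_compl b)
  rw [EA.comm] at hs hbb
  exact hh.le_of_half_le_half (le_of_padd_le_padd hs hbb h)

end IsHalving

theorem CompressionBase.additive (CB : CompressionBase EA) {p : E} (hp : p ∈ CB.P) :
    EA.Additive (CB.J p) :=
  (CB.compr p hp).1.1

theorem CompressionBase.compl_mem (CB : CompressionBase EA) {p : E} (hp : p ∈ CB.P) :
    EA.compl p ∈ CB.P :=
  CB.sub.2.2.1 p hp

theorem CompressionBase.J_le (CB : CompressionBase EA) {p : E} (hp : p ∈ CB.P) (a : E) :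
    EA.le (CB.J p a) p := by
  simpa only [CB.focus p hp] using (CB.additive hp).le (EA.le_one a)

variable {CB : CompressionBase EA}

theorem mackey_of_inC {p q : E} (hp : p ∈ CB.P) (h : inC EA CB q p) : EA.Mackey p q := by
  obtain ⟨p₁, hp₁⟩ := CB.J_le hp q
  obtain ⟨e, he⟩ := exists_padd_of_le_compl (CB.J_le (CB.compl_mem hp) q)
  obtain ⟨d, hd, hde⟩ := EA.assoc _ _ _ _ _ hp₁ he
  have hq : EA.padd (CB.J (EA.compl p) q) (CB.J p q) = some q := by rw [EA.comm]; exact h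
  rw [EA.comm] at hp₁ hde
  exact ⟨p₁, _, _, d, e, hd, hde, hp₁, hq⟩

theorem commuteEl_of_forall_inC {u : E} (hu : ∀ p ∈ CB.P, inC EA CB u p) (s : E) :
    CommuteEl EA CB s u :=
  fun p hp _ hq => mackey_of_inC hp.1.1 (hq.2 p ⟨hp.1.1, hu p hp.1.1⟩)

theorem IsHalving.J_apply_half_one {half : E → E} (hh : EA.IsHalving half) {p : E}
    (hp : p ∈ CB.P) : CB.J p (half EA.one) = half p :=
  (hh p _).1 (by simpa only [CB.focus p hp] using CB.additive hp _ _ _ (hh.padd_self EA.one))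

theorem IsHalving.inC_half_one {half : E → E} (hh : EA.IsHalving half) {p : E}
    (hp : p ∈ CB.P) : inC EA CB (half EA.one) p := by
  unfold inC
  rw [hh.J_apply_half_one hp, hh.J_apply_half_one (CB.compl_mem hp)]
  exact hh.additive _ _ _ (EA.padd_compl p)

theorem le_of_mem_Ple (harch : EA.ArchimedeanEA) {s u p : E} (hp : p ∈ Ple EA CB s u)
    (hinf : ∀ n : ℕ, 0 < n → ∃ y c t, EA.nsmulE n y = some c ∧ EA.padd u y = some t ∧
      EA.le s t) :
    EA.le s u := by
  obtain ⟨⟨hpP, hpC⟩, hsu, z, hz⟩ := hp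
  have hsC : inC EA CB s p := hpC s (Or.inr (Set.mem_insert s _))
  have huC : inC EA CB u p := hpC u (Or.inr (Set.mem_insert_of_mem s rfl))
  have hJ := CB.additive (CB.compl_mem hpP)
  have hz0 : z = EA.zero := harch.eq_zero_of_forall_le fun n hn => by
    obtain ⟨y, c, t, hy, hut, hst⟩ := hinf n hn
    exact ⟨_, _, le_of_padd_le_padd hz (hJ _ _ _ hut) (hJ.le hst), hJ.nsmulE hy⟩
  rw [hz0, EA.padd_zero, Option.some_inj] at hz
  have hs : EA.padd (CB.J p s) (CB.J (EA.compl p) u) = some s := by rw [hz]; exact hsC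
  obtain ⟨t, ht, htu⟩ := padd_le_padd hsu (EA.le_refl _) huC
  rwa [Option.some.inj (ht.symm.trans hs)] at htu

end EffectAlgebra

open EffectAlgebra in
/-- every archimedean divisible effect algebra with a compression base
having the b-comparability property is strongly archimedean: if `a ≤ b ⊕ (1/n)c` for
all `n ∈ ℕ`, then `a ≤ b`. -/
theorem statement18 {E : Type u} (EA : EffectAlgebra E) (CB : CompressionBase EA)
    (harch : EA.ArchimedeanEA)
    (hdiv : ∀ a : E, ∀ n : ℕ, 0 < n → ∃! x : E, EA.nsmulE n x = some a)
    (hbc : BComparability EA CB) :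
    ∀ a b c : E,
      (∀ n : ℕ, 0 < n → ∀ x : E, EA.nsmulE n x = some c →
        ∃ d : E, EA.padd b x = some d ∧ EA.le a d) →
      EA.le a b := by
  intro a b c hyp
  obtain ⟨half, hh⟩ := exists_isHalving fun x => hdiv x 2 two_pos
  obtain ⟨s, hs, -⟩ :=
    padd_le_padd (hh.le_half_one a) (hh.le_half_one (EA.compl b)) (hh.padd_self EA.one)
  obtain ⟨p, hp⟩ := hbc.2 s _ (commuteEl_of_forall_inC (fun _ hp => hh.inC_half_one hp) s)
  refine hh.le_of_le_half_one hs (le_of_mem_Ple harch hp fun n hn => ?_)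
  obtain ⟨x, hx, -⟩ := hdiv c n hn
  obtain ⟨d, hbx, had⟩ := hyp n hn x hx
  obtain ⟨t, ht, hst⟩ := hh.exists_padd_half_one_le hs hbx had
  exact ⟨half x, half c, t, hh.additive.nsmulE hx, ht, hst⟩
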